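/- In the bounded-treewidth dynamic program for maximum-ink SPED, for a join node t with children t_1, t_2 and X_t = X_{t_1} = X_{t_2}, and any valid stub set S ⊆ S(X_t), the table entry satisfies W(t, S) = W(t_1, S) + W(t_2, S) − I(S), using that there is no edge of C between V_{t_1} \ X_t and V_{t_2} \ X_t. -/

import Mathlib

open scoped Classical

/-- The stub pairs `(u, ℓ)` with `u ∈ A` and `ℓ` a candidate stub length of `u`. -/
noncomputable def stubPairs {V : Type*} (cand : V → Finset ℝ) (A : Finset V) :
    Finset (V × ℝ) :=
  A.biUnion fun u => (cand u).image fun l => (u, l)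

/-- A stub set over the vertex set `A` is valid if it contains exactly one candidate stub
pair per vertex of `A` and no two of its pairs intersect. -/
def ValidStubSet {V : Type*} (cand : V → Finset ℝ) (meets : V → ℝ → V → ℝ → Prop)
    (A : Finset V) (S : Finset (V × ℝ)) : Prop :=
  S ⊆ stubPairs cand A ∧ (∀ u ∈ A, ∃! l : ℝ, (u, l) ∈ S) ∧
  ∀ p ∈ S, ∀ q ∈ S, p.1 ≠ q.1 → ¬ meets p.1 p.2 q.1 q.2

/-- The ink of a stub set: the total stub length. -/
noncomputable def inkOf {V : Type*} (S : Finset (V × ℝ)) : ℝ := ∑ p ∈ S, p.2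

/-- The dynamic-programming table: `Wtab cand meets X Vt S` is the maximum ink of a valid
stub set `T` on `Vt` with `S ⊆ T` and `T ∩ S(X) = S` (and `⊥ = -∞` if none exists). -/
noncomputable def Wtab {V : Type*} (cand : V → Finset ℝ)
    (meets : V → ℝ → V → ℝ → Prop) (X Vt : Finset V) (S : Finset (V × ℝ)) : EReal :=
  sSup {x : EReal | ∃ T : Finset (V × ℝ), ValidStubSet cand meets Vt T ∧
    S ⊆ T ∧ T ∩ stubPairs cand X = S ∧ x = (inkOf T : EReal)}


/-! A stub set on `V_{t₁} ∪ V_{t₂}` restricts to stub sets on the two sides that overlap exactly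
in `S`; conversely two such stub sets glue to a valid one, since a conflict between them could
only occur at `X_t`, where they agree, or across the separator, where no stubs meet. The ink
then adds up by inclusion–exclusion, and an empty side makes both sides of the formula `⊥`. -/

section StubSets

variable {V : Type*} {cand : V → Finset ℝ} {meets : V → ℝ → V → ℝ → Prop}
  {A A₁ A₂ B X : Finset V} {S T T₁ T₂ : Finset (V × ℝ)}

theorem mem_stubPairs {p : V × ℝ} : p ∈ stubPairs cand A ↔ p.1 ∈ A ∧ p.2 ∈ cand p.1 := by
  obtain ⟨u, l⟩ := p
  simp [stubPairs, eq_comm, and_comm]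

theorem stubPairs_union : stubPairs cand (A₁ ∪ A₂) = stubPairs cand A₁ ∪ stubPairs cand A₂ := by
  ext p
  simp only [Finset.mem_union, mem_stubPairs]
  tauto

theorem stubPairs_inter : stubPairs cand (A₁ ∩ A₂) = stubPairs cand A₁ ∩ stubPairs cand A₂ := by
  ext p
  simp only [Finset.mem_inter, mem_stubPairs]
  tauto

theorem stubPairs_mono (h : A ⊆ B) : stubPairs cand A ⊆ stubPairs cand B := fun _ hp =>
  mem_stubPairs.2 ⟨h (mem_stubPairs.1 hp).1, (mem_stubPairs.1 hp).2⟩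

theorem inkOf_union_add_inkOf_inter (T₁ T₂ : Finset (V × ℝ)) :
    inkOf (T₁ ∪ T₂) + inkOf (T₁ ∩ T₂) = inkOf T₁ + inkOf T₂ :=
  Finset.sum_union_inter

theorem ValidStubSet.inter_stubPairs (hT : ValidStubSet cand meets A T) (hBA : B ⊆ A) :
    ValidStubSet cand meets B (T ∩ stubPairs cand B) := by
  obtain ⟨hTA, hunique, hdisj⟩ := hT
  refine ⟨Finset.inter_subset_right, fun u hu => ?_, fun p hp q hq =>
    hdisj p (Finset.mem_inter.1 hp).1 q (Finset.mem_inter.1 hq).1⟩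
  obtain ⟨l, hl, hl_unique⟩ := hunique u (hBA hu)
  refine ⟨l, Finset.mem_inter.2 ⟨hl, mem_stubPairs.2 ⟨hu, (mem_stubPairs.1 (hTA hl)).2⟩⟩,
    fun l' hl' => hl_unique l' (Finset.mem_inter.1 hl').1⟩

theorem mem_of_agree (h₂ : T₂ ⊆ stubPairs cand A₂)
    (hagree : T₁ ∩ stubPairs cand (A₁ ∩ A₂) = T₂ ∩ stubPairs cand (A₁ ∩ A₂))
    {p : V × ℝ} (hp : p ∈ T₂) (hp₁ : p.1 ∈ A₁) : p ∈ T₁ := by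
  have hpA₂ := mem_stubPairs.1 (h₂ hp)
  have : p ∈ T₂ ∩ stubPairs cand (A₁ ∩ A₂) :=
    Finset.mem_inter.2 ⟨hp, mem_stubPairs.2 ⟨Finset.mem_inter.2 ⟨hp₁, hpA₂.1⟩, hpA₂.2⟩⟩
  exact (Finset.mem_inter.1 (hagree ▸ this)).1

theorem existsUnique_mem_union (h₁ : ValidStubSet cand meets A₁ T₁)
    (h₂ : T₂ ⊆ stubPairs cand A₂)
    (hagree : T₁ ∩ stubPairs cand (A₁ ∩ A₂) = T₂ ∩ stubPairs cand (A₁ ∩ A₂))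
    {u : V} (hu : u ∈ A₁) : ∃! l : ℝ, (u, l) ∈ T₁ ∪ T₂ := by
  obtain ⟨l, hl, hl_unique⟩ := h₁.2.1 u hu
  refine ⟨l, Finset.mem_union_left _ hl, fun l' hl' => hl_unique l' ?_⟩
  rcases Finset.mem_union.1 hl' with hl' | hl'
  · exact hl'
  · exact mem_of_agree h₂ hagree hl' hu

theorem not_meets_of_mem_of_mem (h₁ : ValidStubSet cand meets A₁ T₁)
    (h₂ : ValidStubSet cand meets A₂ T₂)
    (hagree : T₁ ∩ stubPairs cand (A₁ ∩ A₂) = T₂ ∩ stubPairs cand (A₁ ∩ A₂))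
    (hsep : ∀ u ∈ A₁ \ A₂, ∀ w ∈ A₂ \ A₁, ∀ a b : ℝ, ¬ meets u a w b)
    {p q : V × ℝ} (hp : p ∈ T₁) (hq : q ∈ T₂) (hpq : p.1 ≠ q.1) :
    ¬ meets p.1 p.2 q.1 q.2 := by
  by_cases hq₁ : q.1 ∈ A₁
  · exact h₁.2.2 p hp q (mem_of_agree h₂.1 hagree hq hq₁) hpq
  by_cases hp₂ : p.1 ∈ A₂
  · rw [Finset.inter_comm A₁ A₂] at hagree
    exact h₂.2.2 p (mem_of_agree h₁.1 hagree.symm hp hp₂) q hq hpq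
  exact hsep p.1 (Finset.mem_sdiff.2 ⟨(mem_stubPairs.1 (h₁.1 hp)).1, hp₂⟩)
    q.1 (Finset.mem_sdiff.2 ⟨(mem_stubPairs.1 (h₂.1 hq)).1, hq₁⟩) p.2 q.2

theorem ValidStubSet.union (meets_symm : ∀ u a w b, meets u a w b → meets w b u a)
    (h₁ : ValidStubSet cand meets A₁ T₁) (h₂ : ValidStubSet cand meets A₂ T₂)
    (hagree : T₁ ∩ stubPairs cand (A₁ ∩ A₂) = T₂ ∩ stubPairs cand (A₁ ∩ A₂))
    (hsep : ∀ u ∈ A₁ \ A₂, ∀ w ∈ A₂ \ A₁, ∀ a b : ℝ, ¬ meets u a w b) :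
    ValidStubSet cand meets (A₁ ∪ A₂) (T₁ ∪ T₂) := by
  have hagree' := hagree.symm
  rw [Finset.inter_comm A₁ A₂] at hagree'
  refine ⟨stubPairs_union (cand := cand) ▸ Finset.union_subset_union h₁.1 h₂.1, ?_, ?_⟩
  · intro u hu
    rcases Finset.mem_union.1 hu with hu | hu
    · exact existsUnique_mem_union h₁ h₂.1 hagree hu
    · rw [Finset.union_comm]
      exact existsUnique_mem_union h₂ h₁.1 hagree' hu
  · intro p hp q hq hpq
    rcases Finset.mem_union.1 hp with hp | hp <;> rcases Finset.mem_union.1 hq with hq | hq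
    · exact h₁.2.2 p hp q hq hpq
    · exact not_meets_of_mem_of_mem h₁ h₂ hagree hsep hp hq hpq
    · exact fun h => not_meets_of_mem_of_mem h₁ h₂ hagree hsep hq hp hpq.symm
        (meets_symm _ _ _ _ h)
    · exact h₂.2.2 p hp q hq hpq

/-- The stub sets over which `Wtab cand meets X A S` maximises the ink. -/
def IsStubExtension (cand : V → Finset ℝ) (meets : V → ℝ → V → ℝ → Prop) (X A : Finset V)
    (S T : Finset (V × ℝ)) : Prop :=
  ValidStubSet cand meets A T ∧ S ⊆ T ∧ T ∩ stubPairs cand X = S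

theorem IsStubExtension.inter_stubPairs (hT : IsStubExtension cand meets X A S T) (hXB : X ⊆ B)
    (hBA : B ⊆ A) : IsStubExtension cand meets X B S (T ∩ stubPairs cand B) := by
  obtain ⟨hvalid, hST, hTX⟩ := hT
  refine ⟨hvalid.inter_stubPairs hBA, ?_, ?_⟩
  · exact Finset.subset_inter hST (hTX ▸ Finset.inter_subset_right.trans (stubPairs_mono hXB))
  · rw [Finset.inter_assoc, Finset.inter_eq_right.2 (stubPairs_mono hXB), hTX]

theorem IsStubExtension.inkOf_eq_of_union (hT : IsStubExtension cand meets (A₁ ∩ A₂) (A₁ ∪ A₂) S T) :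
    inkOf T = inkOf (T ∩ stubPairs cand A₁) + inkOf (T ∩ stubPairs cand A₂) - inkOf S := by
  have hunion : (T ∩ stubPairs cand A₁) ∪ (T ∩ stubPairs cand A₂) = T := by
    rw [← Finset.inter_union_distrib_left, ← stubPairs_union, Finset.inter_eq_left.2 hT.1.1]
  have hinter : (T ∩ stubPairs cand A₁) ∩ (T ∩ stubPairs cand A₂) = S := by
    rw [← hT.2.2, stubPairs_inter]
    ext p
    simp only [Finset.mem_inter]
    tauto
  have := inkOf_union_add_inkOf_inter (T ∩ stubPairs cand A₁) (T ∩ stubPairs cand A₂)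
  rw [hunion, hinter] at this
  linarith

theorem IsStubExtension.union (meets_symm : ∀ u a w b, meets u a w b → meets w b u a)
    (hsep : ∀ u ∈ A₁ \ A₂, ∀ w ∈ A₂ \ A₁, ∀ a b : ℝ, ¬ meets u a w b)
    (h₁ : IsStubExtension cand meets (A₁ ∩ A₂) A₁ S T₁)
    (h₂ : IsStubExtension cand meets (A₁ ∩ A₂) A₂ S T₂) :
    IsStubExtension cand meets (A₁ ∩ A₂) (A₁ ∪ A₂) S (T₁ ∪ T₂) ∧
      inkOf (T₁ ∪ T₂) = inkOf T₁ + inkOf T₂ - inkOf S := by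
  obtain ⟨hvalid₁, hST₁, hT₁X⟩ := h₁
  obtain ⟨hvalid₂, hST₂, hT₂X⟩ := h₂
  have hinter : T₁ ∩ T₂ = S := by
    have hsub : T₁ ∩ T₂ ⊆ stubPairs cand (A₁ ∩ A₂) :=
      stubPairs_inter (cand := cand) ▸ Finset.inter_subset_inter hvalid₁.1 hvalid₂.1
    rw [← Finset.inter_eq_left.2 hsub, Finset.inter_right_comm, hT₁X, Finset.inter_eq_left.2 hST₂]
  refine ⟨⟨hvalid₁.union meets_symm hvalid₂ (hT₁X.trans hT₂X.symm) hsep,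
    hST₁.trans Finset.subset_union_left, ?_⟩, ?_⟩
  · rw [Finset.union_inter_distrib_right, hT₁X, hT₂X, Finset.union_self]
  · have := inkOf_union_add_inkOf_inter T₁ T₂
    rw [hinter] at this
    linarith

theorem le_Wtab (hT : IsStubExtension cand meets X A S T) :
    (inkOf T : EReal) ≤ Wtab cand meets X A S :=
  le_sSup ⟨T, hT.1, hT.2.1, hT.2.2, rfl⟩

theorem Wtab_le {y : EReal} (h : ∀ T, IsStubExtension cand meets X A S T → (inkOf T : EReal) ≤ y) :
    Wtab cand meets X A S ≤ y :=
  sSup_le fun _ ⟨T, hvalid, hST, hTX, hx⟩ => hx ▸ h T ⟨hvalid, hST, hTX⟩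

/-- There are finitely many valid stub sets on `A`, so the supremum is attained unless it is
empty. -/
theorem Wtab_eq_bot_or_exists (cand : V → Finset ℝ) (meets : V → ℝ → V → ℝ → Prop)
    (X A : Finset V) (S : Finset (V × ℝ)) :
    Wtab cand meets X A S = ⊥ ∨
      ∃ T, IsStubExtension cand meets X A S T ∧ Wtab cand meets X A S = inkOf T := by
  set inks : Set EReal := {x | ∃ T : Finset (V × ℝ), ValidStubSet cand meets A T ∧
    S ⊆ T ∧ T ∩ stubPairs cand X = S ∧ x = (inkOf T : EReal)}
  have hfinite : inks.Finite := by
    refine ((stubPairs cand A).powerset.finite_toSet.image fun T => (inkOf T : EReal)).subset ?_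
    rintro x ⟨T, hvalid, -, -, rfl⟩
    exact ⟨T, Finset.mem_powerset.2 hvalid.1, rfl⟩
  rcases inks.eq_empty_or_nonempty with hempty | hnonempty
  · left
    change sSup inks = ⊥
    rw [hempty, sSup_empty]
  · obtain ⟨T, hvalid, hST, hTX, hmax⟩ := hnonempty.csSup_mem hfinite
    exact .inr ⟨T, ⟨hvalid, hST, hTX⟩, hmax⟩

theorem Wtab_union (meets_symm : ∀ u a w b, meets u a w b → meets w b u a)
    (hsep : ∀ u ∈ A₁ \ A₂, ∀ w ∈ A₂ \ A₁, ∀ a b : ℝ, ¬ meets u a w b) (S : Finset (V × ℝ)) :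
    Wtab cand meets (A₁ ∩ A₂) (A₁ ∪ A₂) S =
      Wtab cand meets (A₁ ∩ A₂) A₁ S + Wtab cand meets (A₁ ∩ A₂) A₂ S - (inkOf S : EReal) := by
  apply le_antisymm
  · refine Wtab_le fun T hT => ?_
    rw [hT.inkOf_eq_of_union, EReal.coe_sub, EReal.coe_add]
    exact EReal.sub_le_sub (add_le_add
      (le_Wtab (hT.inter_stubPairs Finset.inter_subset_left Finset.subset_union_left))
      (le_Wtab (hT.inter_stubPairs Finset.inter_subset_right Finset.subset_union_right))) le_rfl
  · rcases Wtab_eq_bot_or_exists cand meets (A₁ ∩ A₂) A₁ S with hW₁ | ⟨T₁, hT₁, hW₁⟩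
    · simp [hW₁]
    rcases Wtab_eq_bot_or_exists cand meets (A₁ ∩ A₂) A₂ S with hW₂ | ⟨T₂, hT₂, hW₂⟩
    · simp [hW₂]
    obtain ⟨hT, hink⟩ := hT₁.union meets_symm hsep hT₂
    rw [hW₁, hW₂, ← EReal.coe_add, ← EReal.coe_sub, ← hink]
    exact le_Wtab hT

end StubSets

theorem stmt_10_general {V : Type*} [DecidableEq V] (cand : V → Finset ℝ)
    (meets : V → ℝ → V → ℝ → Prop)
    (meets_symm : ∀ u a w b, meets u a w b → meets w b u a)
    (Xt Vt₁ Vt₂ Vt : Finset V)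
    (hVt : Vt = Vt₁ ∪ Vt₂) (hcap : Vt₁ ∩ Vt₂ = Xt)
    (hsep : ∀ u ∈ Vt₁ \ Xt, ∀ w ∈ Vt₂ \ Xt, ∀ a b : ℝ, ¬ meets u a w b)
    (S : Finset (V × ℝ)) :
    Wtab cand meets Xt Vt S =
      Wtab cand meets Xt Vt₁ S + Wtab cand meets Xt Vt₂ S - (inkOf S : EReal) := by
  -- the hypotheses use the given `DecidableEq V`, `Wtab_union` the classical one
  obtain rfl : ‹DecidableEq V› = fun a b => Classical.propDecidable (a = b) :=
    Subsingleton.elim _ _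
  subst hVt hcap
  rw [Finset.sdiff_inter_self_left, Finset.sdiff_inter_self_right] at hsep
  exact Wtab_union meets_symm hsep S

/-- the join-node recurrence of the bounded-treewidth DP for MaxSPED.
At a join node `t` with children `t₁, t₂`, `X_t = X_{t₁} = X_{t₂}`,
`V_t = V_{t₁} ∪ V_{t₂}`, `V_{t₁} ∩ V_{t₂} = X_t`, and no stub of a vertex in
`V_{t₁} \ X_t` intersects a stub of a vertex in `V_{t₂} \ X_t` (no edge of C between
those sets).  For any valid stub set `S ⊆ S(X_t)`,
`W(t, S) = W(t₁, S) + W(t₂, S) − I(S)`. -/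
theorem stmt_10 {V : Type*} [DecidableEq V] (cand : V → Finset ℝ)
    (meets : V → ℝ → V → ℝ → Prop)
    (meets_symm : ∀ u a w b, meets u a w b → meets w b u a)
    (Xt Vt₁ Vt₂ Vt : Finset V)
    (hX₁ : Xt ⊆ Vt₁) (hX₂ : Xt ⊆ Vt₂)
    (hVt : Vt = Vt₁ ∪ Vt₂) (hcap : Vt₁ ∩ Vt₂ = Xt)
    (hsep : ∀ u ∈ Vt₁ \ Xt, ∀ w ∈ Vt₂ \ Xt, ∀ a b : ℝ, ¬ meets u a w b)
    (S : Finset (V × ℝ)) (hS : ValidStubSet cand meets Xt S) :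
    Wtab cand meets Xt Vt S =
      Wtab cand meets Xt Vt₁ S + Wtab cand meets Xt Vt₂ S - (inkOf S : EReal) :=
  stmt_10_general cand meets meets_symm Xt Vt₁ Vt₂ Vt hVt hcap hsep S
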